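/- For every hash sequence of n cars on m places with 1 ≤ n < m, and every k ∈ {1,…,m−1}: H_{V+k} = C_{V+k} − C_V + max_{1≤i≤k} (C_{V−1} − C_{V+i−1})_+, where x_+ = max(x,0). -/

import Mathlib

open MeasureTheory Filter
open scoped BigOperators

attribute [local instance] Classical.propDecidable

namespace Parking

variable {m : ℕ}

/-- Final parking spot of a car whose first try is place `s`, given the set `occ`
of currently occupied places (places are cyclic, i.e. elements of `ZMod m`). -/
noncomputable def spot (occ : Finset (ZMod m)) (s : ZMod m) : ZMod m :=
  if h : ∃ t : ℕ, s + (t : ZMod m) ∉ occ then s + ((Nat.find h : ℕ) : ZMod m) else s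

/-- Set of occupied places after the first `k` cars of the hash sequence `p` have parked. -/
noncomputable def occs (p : ℕ → ZMod m) : ℕ → Finset (ZMod m)
  | 0 => ∅
  | k + 1 => insert (spot (occs p k) (p k)) (occs p k)

/-- Number of consecutive occupied places starting at `x` (0 if `x` is empty). -/
noncomputable def runLen (occ : Finset (ZMod m)) (x : ZMod m) : ℕ :=
  if h : ∃ t : ℕ, x + (t : ZMod m) ∉ occ then Nat.find h else 0

/-- First place of the block of consecutive occupied places containing `x`. -/
noncomputable def blockStart (occ : Finset (ZMod m)) (x : ZMod m) : ZMod m :=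
  if h : ∃ t : ℕ, x - ((t : ZMod m) + 1) ∉ occ then x - ((Nat.find h : ℕ) : ZMod m) else x

/-- Starting places of the blocks of consecutive occupied places. -/
noncomputable def blockStarts (occ : Finset (ZMod m)) : Finset (ZMod m) :=
  occ.filter (fun x => x - 1 ∉ occ)

/-- The multiset of sizes of the blocks of consecutive occupied places. -/
noncomputable def blockSizes (occ : Finset (ZMod m)) : Multiset ℕ :=
  (blockStarts occ).val.map (runLen occ)

/-- `B n p k` : size of the `k`-th largest block (1-indexed, `0` if there are fewer
than `k` blocks) once the `n` first cars of the hash sequence `p` have parked. -/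
noncomputable def B (n : ℕ) (p : ℕ → ZMod m) (k : ℕ) : ℕ :=
  ((Multiset.sort (blockSizes (occs p n)) (· ≤ ·)).reverse).getD (k - 1) 0

/-- `R n p k` : size of the `k`-th block (1-indexed, `0` if there are fewer than `k`
blocks), blocks being sorted by increasing date of birth (increasing order of the first
arrival of a car of the block), once the `n` first cars of `p` have parked. -/
noncomputable def R (n : ℕ) (p : ℕ → ZMod m) (k : ℕ) : ℕ :=
  (((((List.range n).map
        (fun i => blockStart (occs p n) (spot (occs p i) (p i)))).reverse.dedup).reverse).map
      (runLen (occs p n))).getD (k - 1) 0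

/-- Number of places tried by car `i` beyond its first try. -/
noncomputable def offs (p : ℕ → ZMod m) (i : ℕ) : ℕ :=
  if h : ∃ t : ℕ, p i + (t : ZMod m) ∉ occs p i then Nat.find h else 0

/-- `H n p y` : number of cars among the `n` first cars of `p` that tried place `y`,
successfully or not. -/
noncomputable def H (n : ℕ) (p : ℕ → ZMod m) (y : ZMod m) : ℕ :=
  ((Finset.range n).filter (fun i => ∃ t : ℕ, t ≤ offs p i ∧ p i + (t : ZMod m) = y)).card

/-- `Y n p k` : number of cars whose first try is place `k` (periodic in `k`). -/
noncomputable def Y (n : ℕ) (p : ℕ → ZMod m) (k : ℤ) : ℕ :=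
  ((Finset.range n).filter (fun i => p i = (k : ZMod m))).card

/-- `A n p k = Y₁ + ⋯ + Y_k - k n / m`. -/
noncomputable def A (n : ℕ) (p : ℕ → ZMod m) (k : ℕ) : ℝ :=
  (∑ j ∈ Finset.range k, (Y n p (j + 1) : ℝ)) - (k : ℝ) * n / m

/-- `V n p` : the smallest `j ∈ {1, …, m}` at which `A` attains its minimum over `{1, …, m}`. -/
noncomputable def V (n : ℕ) (p : ℕ → ZMod m) : ℕ :=
  sInf {j | 1 ≤ j ∧ j ≤ m ∧ ∀ i, 1 ≤ i → i ≤ m → A n p j ≤ A n p i}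

/-- `C n p k = Y₁ + ⋯ + Y_k - k` for `0 ≤ k ≤ m`, extended to `ℤ` by `C (k + m) = C k - ℓ`. -/
noncomputable def C (n : ℕ) (p : ℕ → ZMod m) (k : ℤ) : ℤ :=
  ((∑ j ∈ Finset.range (k.emod m).toNat, (Y n p (j + 1) : ℤ)) - ((k.emod m).toNat : ℤ))
    - k.ediv m * ((m : ℤ) - (n : ℤ))

/-- Extension of a hash sequence `Fin n → Fin m` to a map `ℕ → ZMod m`. -/
def ext (m n : ℕ) (p : Fin n → Fin m) : ℕ → ZMod m :=
  fun i => if h : i < n then (((p ⟨i, h⟩) : ℕ) : ZMod m) else 0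

/-- Probability of an event under the uniform distribution on the `m ^ n` hash sequences. -/
noncomputable def parkProb (m n : ℕ) (ev : (ℕ → ZMod m) → Prop) : ℝ :=
  ((Finset.univ.filter (fun p : Fin n → Fin m => ev (ext m n p))).card : ℝ) / (m : ℝ) ^ n

/-- Expectation of a random variable under the uniform distribution on hash sequences. -/
noncomputable def parkExp (m n : ℕ) (X : (ℕ → ZMod m) → ℝ) : ℝ :=
  (∑ p : Fin n → Fin m, X (ext m n p)) / (m : ℝ) ^ n

/-- `φ(M,N,K) = binom(N−1,K−1) (K+1)^{K−1} M (M−K−1)^{N−K−1} (M−N−1) / M^N`. -/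
noncomputable def phi (M N K : ℕ) : ℝ :=
  (Nat.choose (N - 1) (K - 1) : ℝ) * ((K : ℝ) + 1) ^ (K - 1) * (M : ℝ)
      * ((M - K - 1 : ℕ) : ℝ) ^ (N - K - 1) * ((M - N - 1 : ℕ) : ℝ) / (M : ℝ) ^ N

/-- The density `f(λ,x) = (λ/√(2π)) x^{−1/2} (1−x)^{−3/2} exp(−λ²x/(2(1−x)))` on `(0,1)`. -/
noncomputable def fdens (l x : ℝ) : ℝ :=
  if 0 < x ∧ x < 1 then
    l / Real.sqrt (2 * Real.pi) * x ^ (-(1 : ℝ) / 2) * (1 - x) ^ (-(3 : ℝ) / 2)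
      * Real.exp (-(l ^ 2 * x) / (2 * (1 - x)))
  else 0

/-!
Call a car's *tries* the places it inspects. The cars trying `y + 1` are those hashed to `y + 1`
together with those that tried `y` and did not park there, and exactly one car parks at `y` as
soon as some car tries `y`; hence the Lindley recursion `H_{y+1} = Y_{y+1} + (H_y - 1)₊`.
Since `C_{y+1} - C_y = Y_{y+1} - 1`, this recursion can be solved explicitly from any place `v`
with `H_v = 0`, which gives the formula once `H_V = 0` is known.

For the latter, `m A_k = m C_k + k ℓ` for `0 ≤ k ≤ m`, and the right-hand side is `m`-periodic
in `k ∈ ℤ`, so it is minimal at `V` among all integers. Starting the recursion at an empty place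
`v` and reaching `V ≡ v + k`, this minimality and `ℓ > 0` say that `C_{v+k} < C_{v+i}` for all
`i < k`, and the explicit solution then gives `H_{v+k} ≤ 0`.
-/

section Lindley

variable {h c : ℤ → ℤ} {v : ℤ}

theorem lindley_solution (hv : h v = 0)
    (step : ∀ j, h (j + 1) = c (j + 1) - c j + 1 + max (h j - 1) 0) (k : ℕ) :
    h (v + k) = c (v + k) - c v
      + (((Finset.Icc 1 k).sup (fun i => (c v + 1 - c (v + i - 1)).toNat) : ℕ) : ℤ) := by
  induction k with
  | zero => simp [hv]
  | succ k ih =>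
    rw [← Finset.insert_Icc_right_eq_Icc_add_one (by omega), Finset.sup_insert, Nat.cast_add_one,
      ← add_assoc, step, ih, add_sub_cancel_right]
    push_cast
    omega

theorem lindley_nonpos_of_lt (hv : h v = 0)
    (step : ∀ j, h (j + 1) = c (j + 1) - c j + 1 + max (h j - 1) 0) {k : ℕ}
    (hlt : ∀ i < k, c (v + k) < c (v + i)) : h (v + k) ≤ 0 := by
  have hsup : (((Finset.Icc 1 k).sup (fun i => (c v + 1 - c (v + i - 1)).toNat) : ℕ) : ℤ)
      ≤ c v - c (v + k) := by
    have hle : c (v + k) ≤ c v := by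
      rcases k.eq_zero_or_pos with rfl | hk
      · simp
      · simpa using (hlt 0 hk).le
    rw [← Int.toNat_of_nonneg (sub_nonneg.mpr hle), Nat.cast_le]
    refine Finset.sup_le fun i hi => Int.toNat_le_toNat ?_
    have := hlt (i - 1) (by simp at hi; omega)
    rw [Nat.cast_sub (by simp at hi; omega), Nat.cast_one, ← add_sub_assoc] at this
    omega
  rw [lindley_solution hv step k]
  omega

end Lindley

section Occupancy

variable {m : ℕ} {p : ℕ → ZMod m} {i : ℕ}

noncomputable def parkPlace (p : ℕ → ZMod m) (i : ℕ) : ZMod m :=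
  spot (occs p i) (p i)

theorem occs_succ (p : ℕ → ZMod m) (i : ℕ) :
    occs p (i + 1) = insert (parkPlace p i) (occs p i) := rfl

theorem exists_add_notMem_of_card_lt {occ : Finset (ZMod m)} (h : occ.card < m) (s : ZMod m) :
    ∃ t : ℕ, t < m ∧ s + (t : ZMod m) ∉ occ := by
  have : NeZero m := ⟨by omega⟩
  obtain ⟨x, -, hx⟩ := Finset.exists_mem_notMem_of_card_lt_card
    (s := occ) (t := Finset.univ) (by rwa [Finset.card_univ, ZMod.card])
  exact ⟨(x - s).val, ZMod.val_lt _, by rwa [ZMod.natCast_zmod_val, add_sub_cancel]⟩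

theorem mem_occs_iff {x : ZMod m} {j : ℕ} : x ∈ occs p j ↔ ∃ i < j, parkPlace p i = x := by
  induction j with
  | zero => simp [occs]
  | succ j ih =>
    simp only [occs_succ, Finset.mem_insert, ih, Nat.lt_succ_iff_lt_or_eq, or_and_right,
      exists_or, exists_eq_left, eq_comm (a := x)]
    exact or_comm

theorem occs_mono : Monotone (occs p) := fun _ _ hij _ hx =>
  let ⟨i, hi, hx⟩ := mem_occs_iff.mp hx
  mem_occs_iff.mpr ⟨i, lt_of_lt_of_le hi hij, hx⟩

theorem exists_add_notMem_occs (h : (occs p i).card < m) :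
    ∃ t : ℕ, p i + (t : ZMod m) ∉ occs p i :=
  let ⟨t, _, ht⟩ := exists_add_notMem_of_card_lt h (p i)
  ⟨t, ht⟩

theorem parkPlace_eq_add_offs (h : (occs p i).card < m) :
    parkPlace p i = p i + (offs p i : ZMod m) := by
  rw [parkPlace, spot, offs, dif_pos (exists_add_notMem_occs h), dif_pos (exists_add_notMem_occs h)]

theorem parkPlace_notMem (h : (occs p i).card < m) : parkPlace p i ∉ occs p i := by
  rw [parkPlace_eq_add_offs h, offs, dif_pos (exists_add_notMem_occs h)]
  exact Nat.find_spec (exists_add_notMem_occs h)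

theorem add_mem_occs_of_lt_offs (h : (occs p i).card < m) {t : ℕ} (ht : t < offs p i) :
    p i + (t : ZMod m) ∈ occs p i := by
  rw [offs, dif_pos (exists_add_notMem_occs h)] at ht
  simpa using Nat.find_min (exists_add_notMem_occs h) ht

theorem offs_lt (h : (occs p i).card < m) : offs p i < m := by
  obtain ⟨t, htm, ht⟩ := exists_add_notMem_of_card_lt h (p i)
  rw [offs, dif_pos (exists_add_notMem_occs h)]
  exact lt_of_le_of_lt (Nat.find_min' _ ht) htm

theorem card_occs (hi : i ≤ m) : (occs p i).card = i := by
  induction i with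
  | zero => simp [occs]
  | succ i ih =>
    have hci := ih (by omega)
    rw [occs_succ, Finset.card_insert_of_notMem (parkPlace_notMem (by omega)), hci]

theorem card_occs_lt (hi : i < m) : (occs p i).card < m := by
  rwa [card_occs hi.le]

end Occupancy

section Tries

variable {m n : ℕ} {p : ℕ → ZMod m} {i : ℕ} {y : ZMod m}

def Tries (p : ℕ → ZMod m) (i : ℕ) (y : ZMod m) : Prop :=
  ∃ t : ℕ, t ≤ offs p i ∧ p i + (t : ZMod m) = y

theorem H_eq_card_filter_tries (n : ℕ) (p : ℕ → ZMod m) (y : ZMod m) :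
    H n p y = ((Finset.range n).filter (Tries p · y)).card := by
  rw [H]
  congr

theorem parkPlace_injOn : Set.InjOn (parkPlace p) (Set.Iio m) := by
  suffices ∀ {i j}, j < m → i < j → parkPlace p i ≠ parkPlace p j by
    intro i hi j hj hij
    by_contra hne
    rcases Nat.lt_or_gt_of_ne hne with h | h
    exacts [this hj h hij, this hi h hij.symm]
  intro i j hj hij heq
  exact parkPlace_notMem (card_occs_lt hj) (mem_occs_iff.mpr ⟨i, hij, heq⟩)

theorem tries_and_ne_iff (hi : i < m) :
    Tries p i y ∧ parkPlace p i ≠ y ↔ ∃ t < offs p i, p i + (t : ZMod m) = y := by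
  rw [parkPlace_eq_add_offs (card_occs_lt hi)]
  constructor
  · rintro ⟨⟨t, ht, rfl⟩, hne⟩
    exact ⟨t, lt_of_le_of_ne ht (by rintro rfl; exact hne rfl), rfl⟩
  · rintro ⟨t, ht, rfl⟩
    refine ⟨⟨t, ht.le, rfl⟩, fun heq => ?_⟩
    have hmem := add_mem_occs_of_lt_offs (card_occs_lt hi) ht
    rw [← heq, ← parkPlace_eq_add_offs (card_occs_lt hi)] at hmem
    exact parkPlace_notMem (card_occs_lt hi) hmem

theorem tries_add_one_iff (hi : i < m) :
    Tries p i (y + 1) ↔ p i = y + 1 ∨ (Tries p i y ∧ parkPlace p i ≠ y) := by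
  rw [tries_and_ne_iff hi]
  constructor
  · rintro ⟨_ | s, hs, hsy⟩
    · simpa using Or.inl hsy
    · refine Or.inr ⟨s, hs, add_right_cancel (b := 1) ?_⟩
      rw [← hsy]
      push_cast
      ring
  · rintro (h | ⟨s, hs, hsy⟩)
    · exact ⟨0, Nat.zero_le _, by simpa using h⟩
    · exact ⟨s + 1, hs, by push_cast; rw [← add_assoc, hsy]⟩

theorem not_tries_and_ne_of_eq_add_one (hi : i < m) (h : p i = y + 1) :
    ¬ (Tries p i y ∧ parkPlace p i ≠ y) := by
  rw [tries_and_ne_iff hi]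
  rintro ⟨s, hs, hsy⟩
  have hzero : ((s + 1 : ℕ) : ZMod m) = 0 := by
    push_cast
    linear_combination hsy - h
  rw [ZMod.natCast_eq_zero_iff] at hzero
  have := offs_lt (card_occs_lt (p := p) hi)
  have := Nat.eq_zero_of_dvd_of_lt hzero (by omega)
  omega

theorem mem_occs_of_tries (hn : n ≤ m) (hi : i < n) (h : Tries p i y) : y ∈ occs p n := by
  by_cases hpark : parkPlace p i = y
  · exact mem_occs_iff.mpr ⟨i, hi, hpark⟩
  · obtain ⟨t, ht, rfl⟩ := (tries_and_ne_iff (by omega)).mp ⟨h, hpark⟩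
    exact occs_mono hi.le (add_mem_occs_of_lt_offs (card_occs_lt (by omega)) ht)

theorem card_filter_tries_and_ne (hn : n ≤ m) (y : ZMod m) :
    ((Finset.range n).filter (fun i => Tries p i y ∧ parkPlace p i ≠ y)).card
      = H n p y - 1 := by
  rw [H_eq_card_filter_tries]
  set T := (Finset.range n).filter (Tries p · y)
  set P := (Finset.range n).filter (parkPlace p · = y)
  have hPT : P ⊆ T := by
    intro i hi
    simp only [P, T, Finset.mem_filter, Finset.mem_range] at hi ⊢
    refine ⟨hi.1, offs p i, le_rfl, ?_⟩
    rw [← hi.2, parkPlace_eq_add_offs (card_occs_lt (by omega))]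
  have hP : P.card ≤ 1 := Finset.card_le_one.mpr fun i hi j hj => by
    simp only [P, Finset.mem_filter, Finset.mem_range] at hi hj
    exact parkPlace_injOn (by simp; omega) (by simp; omega) (hi.2.trans hj.2.symm)
  have hTP : T.Nonempty → P.Nonempty := by
    rintro ⟨i, hi⟩
    simp only [T, Finset.mem_filter, Finset.mem_range] at hi
    obtain ⟨j, hj, hjy⟩ := mem_occs_iff.mp (mem_occs_of_tries hn hi.1 hi.2)
    exact ⟨j, by simp [P, hj, hjy]⟩
  rw [Finset.filter_and_not, Finset.card_sdiff_of_subset hPT]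
  rcases T.eq_empty_or_nonempty with hT | hT
  · simp [hT]
  · have := (hTP hT).card_pos
    omega

theorem H_add_one (hn : n ≤ m) (y : ZMod m) :
    H n p (y + 1) = ((Finset.range n).filter (p · = y + 1)).card + (H n p y - 1) := by
  have hsplit : (Finset.range n).filter (Tries p · (y + 1))
      = (Finset.range n).filter (p · = y + 1)
        ∪ (Finset.range n).filter (fun i => Tries p i y ∧ parkPlace p i ≠ y) := by
    rw [← Finset.filter_or]
    exact Finset.filter_congr fun i hi => tries_add_one_iff (by simp at hi; omega)
  rw [H_eq_card_filter_tries, hsplit, Finset.card_union_of_disjoint, card_filter_tries_and_ne hn]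
  exact Finset.disjoint_filter.mpr fun i hi =>
    not_tries_and_ne_of_eq_add_one (by simp at hi; omega)

theorem H_eq_zero_of_notMem (hn : n ≤ m) (hy : y ∉ occs p n) : H n p y = 0 := by
  rw [H_eq_card_filter_tries, Finset.card_eq_zero, Finset.filter_eq_empty_iff]
  exact fun i hi h => hy (mem_occs_of_tries hn (Finset.mem_range.mp hi) h)

theorem Y_eq_zero_of_H_eq_zero {k : ℤ} (h : H n p (k : ZMod m) = 0) : Y n p k = 0 := by
  rw [H_eq_card_filter_tries, Finset.card_eq_zero, Finset.filter_eq_empty_iff] at h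
  rw [Y, Finset.card_eq_zero, Finset.filter_eq_empty_iff]
  exact fun i hi hpi => h hi ⟨0, Nat.zero_le _, by simpa using hpi⟩

end Tries

section Walk

variable {m n : ℕ} {p : ℕ → ZMod m}

theorem Y_add_mul (k q : ℤ) : Y n p (k + m * q) = Y n p k := by
  simp [Y]

theorem C_eq (n : ℕ) (p : ℕ → ZMod m) (k : ℤ) :
    C n p k = ∑ j ∈ Finset.range (k % m).toNat, (Y n p (j + 1) : ℤ) - (k % m).toNat
      - k / m * (m - n) := rfl

variable [NeZero m]

theorem sum_range_natCast_eq_sum_univ {M : Type*} [AddCommMonoid M] (g : ZMod m → M) :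
    ∑ j ∈ Finset.range m, g j = ∑ x : ZMod m, g x :=
  Finset.sum_nbij' Nat.cast ZMod.val (by simp) (by simp [ZMod.val_lt])
    (fun j hj => ZMod.val_cast_of_lt (Finset.mem_range.mp hj)) (fun x _ => ZMod.natCast_zmod_val x)
    (fun _ _ => rfl)

theorem sum_Y (n : ℕ) (p : ℕ → ZMod m) : ∑ j ∈ Finset.range m, Y n p (j + 1) = n := by
  calc ∑ j ∈ Finset.range m, Y n p (j + 1)
      = ∑ j ∈ Finset.range m, ((Finset.range n).filter (p · = (j : ZMod m) + 1)).card := by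
        simp [Y]
    _ = ∑ x : ZMod m, ((Finset.range n).filter (p · = x + 1)).card :=
        sum_range_natCast_eq_sum_univ (fun x => ((Finset.range n).filter (p · = x + 1)).card)
    _ = ∑ x : ZMod m, ((Finset.range n).filter (p · = x)).card :=
        Equiv.sum_comp (Equiv.addRight 1) (fun x => ((Finset.range n).filter (p · = x)).card)
    _ = n := by
        rw [← Finset.card_eq_sum_card_fiberwise (fun _ _ => Finset.mem_univ _), Finset.card_range]

theorem C_add_mul (k q : ℤ) : C n p (k + m * q) = C n p k - q * (m - n) := by
  rw [C_eq, C_eq, Int.add_mul_emod_self_left,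
    Int.add_mul_ediv_left _ _ (by exact_mod_cast NeZero.ne m)]
  ring

theorem C_natCast_of_le {r : ℕ} (hr : r ≤ m) :
    C n p r = ∑ j ∈ Finset.range r, (Y n p (j + 1) : ℤ) - r := by
  rcases hr.lt_or_eq with hr | rfl
  · rw [C_eq, Int.emod_eq_of_lt (by omega) (by omega),
      Int.ediv_eq_zero_of_lt (by omega) (by omega)]
    simp
  · have := C_add_mul (n := n) (p := p) 0 1
    rw [zero_add, mul_one] at this
    rw [this, ← Nat.cast_sum, sum_Y]
    simp [C_eq]

theorem C_add_one (k : ℤ) : C n p (k + 1) = C n p k + Y n p (k + 1) - 1 := by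
  have hm : (0 : ℤ) < m := by exact_mod_cast Nat.pos_of_neZero m
  set r := (k % m).toNat
  have hr : r < m := by have := Int.emod_lt_of_pos k hm; omega
  have hk : k = r + m * (k / m) := by
    rw [Int.toNat_of_nonneg (Int.emod_nonneg k hm.ne')]
    exact (Int.emod_add_mul_ediv k m).symm
  rw [hk, add_right_comm, C_add_mul, C_add_mul, Y_add_mul, ← Nat.cast_add_one,
    C_natCast_of_le hr, C_natCast_of_le hr.le, Finset.sum_range_succ]
  push_cast
  ring

theorem H_step (hn : n ≤ m) (j : ℤ) :
    (H n p ((j + 1 : ℤ) : ZMod m) : ℤ)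
      = C n p (j + 1) - C n p j + 1 + max ((H n p (j : ZMod m) : ℤ) - 1) 0 := by
  have hY : Y n p (j + 1) = ((Finset.range n).filter (p · = (j : ZMod m) + 1)).card := by
    simp [Y]
  rw [Int.cast_add, Int.cast_one, H_add_one hn, C_add_one, hY]
  omega

end Walk

section MinimumOfA

variable {m n : ℕ} {p : ℕ → ZMod m} [NeZero m]

noncomputable def scaledA (n : ℕ) (p : ℕ → ZMod m) (k : ℤ) : ℤ :=
  m * C n p k + k * (m - n)

theorem scaledA_add_mul (k q : ℤ) : scaledA n p (k + m * q) = scaledA n p k := by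
  rw [scaledA, scaledA, C_add_mul]
  ring

theorem mul_A_eq_scaledA {r : ℕ} (hr : r ≤ m) : (m : ℝ) * A n p r = scaledA n p r := by
  have hm : (m : ℝ) ≠ 0 := NeZero.ne _
  rw [scaledA, C_natCast_of_le hr, A]
  push_cast
  field_simp
  ring

theorem V_spec :
    1 ≤ V n p ∧ V n p ≤ m ∧ ∀ i, 1 ≤ i → i ≤ m → A n p (V n p) ≤ A n p i := by
  obtain ⟨j, hj, hjmin⟩ := Finset.exists_min_image (Finset.Icc 1 m) (A n p)
    ⟨m, by simp [Nat.one_le_iff_ne_zero, NeZero.ne m]⟩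
  rw [Finset.mem_Icc] at hj
  have hne : {j | 1 ≤ j ∧ j ≤ m ∧ ∀ i, 1 ≤ i → i ≤ m → A n p j ≤ A n p i}.Nonempty :=
    ⟨j, hj.1, hj.2, fun i h1 h2 => hjmin i (Finset.mem_Icc.mpr ⟨h1, h2⟩)⟩
  exact Nat.sInf_mem hne

theorem scaledA_V_le (j : ℤ) : scaledA n p (V n p) ≤ scaledA n p j := by
  have hm : (0 : ℤ) < m := by exact_mod_cast Nat.pos_of_neZero m
  obtain ⟨hV1, hVm, hVmin⟩ := V_spec (n := n) (p := p)
  set i := ((j - 1) % m).toNat + 1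
  have hi : i ≤ m := by have := Int.emod_lt_of_pos (j - 1) hm; omega
  have hj : j = i + m * ((j - 1) / m) := by
    have := Int.emod_add_mul_ediv (j - 1) m
    have := Int.emod_nonneg (j - 1) hm.ne'
    omega
  rw [hj, scaledA_add_mul]
  have := mul_le_mul_of_nonneg_left (hVmin i (by omega) hi) (Nat.cast_nonneg m)
  rw [mul_A_eq_scaledA hVm, mul_A_eq_scaledA hi] at this
  exact_mod_cast this

theorem H_V_eq_zero (hn : n < m) : H n p ((V n p : ℤ) : ZMod m) = 0 := by
  have hm : (0 : ℤ) < m := by exact_mod_cast Nat.pos_of_neZero m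
  obtain ⟨t, -, ht⟩ :=
    exists_add_notMem_of_card_lt (by rwa [card_occs hn.le] : (occs p n).card < m) 0
  set v : ℤ := (t : ℤ)
  have hv : (H n p (v : ZMod m) : ℤ) = 0 := by
    rw [zero_add] at ht
    simp [v, H_eq_zero_of_notMem hn.le ht]
  set k := ((V n p - v) % m).toNat
  have hk : (V n p : ℤ) = v + k + m * ((V n p - v) / m) := by
    have := Int.emod_add_mul_ediv (V n p - v) m
    have := Int.emod_nonneg (V n p - v) hm.ne'
    omega
  have hlt : ∀ i < k, C n p (v + k) < C n p (v + i) := by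
    intro i hi
    have hle := scaledA_V_le (n := n) (p := p) (v + i)
    rw [hk, scaledA_add_mul, scaledA, scaledA] at hle
    have : (0 : ℤ) < (k - i) * (m - n) := mul_pos (by omega) (by omega)
    nlinarith
  have hVk := lindley_nonpos_of_lt (h := fun j => (H n p (j : ZMod m) : ℤ)) hv (H_step hn.le) hlt
  rw [hk, Int.cast_add, Int.cast_mul, Int.cast_natCast m, ZMod.natCast_self, zero_mul, add_zero]
  omega

end MinimumOfA

theorem H_eq_C_plus_record_term_general
    (m n : ℕ) (h2 : n < m) (p : ℕ → ZMod m)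
    (k : ℕ) :
    (H n p (((V n p + k : ℕ)) : ZMod m) : ℤ)
      = C n p ((V n p : ℤ) + k) - C n p (V n p)
        + (((Finset.Icc 1 k).sup
            (fun i => (C n p ((V n p : ℤ) - 1) - C n p ((V n p : ℤ) + i - 1)).toNat) : ℕ) : ℤ) := by
  have : NeZero m := ⟨by omega⟩
  have hV := H_V_eq_zero (p := p) h2
  have hC : C n p ((V n p : ℤ) - 1) = C n p (V n p) + 1 := by
    have hstep := C_add_one (n := n) (p := p) ((V n p : ℤ) - 1)
    rw [sub_add_cancel, Y_eq_zero_of_H_eq_zero hV] at hstep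
    omega
  have hsol := lindley_solution (h := fun j => (H n p (j : ZMod m) : ℤ)) (v := V n p)
    (by simp only [hV, Nat.cast_zero]) (H_step h2.le) k
  rw [hC]
  push_cast at hsol ⊢
  exact hsol

/-- Skorohod-type representation of the visit counts:
`H_{V+k} = C_{V+k} − C_V + max_{1≤i≤k} (C_{V−1} − C_{V+i−1})₊`.
(For an integer `z`, `z.toNat` is exactly the positive part `z₊`.) -/
theorem H_eq_C_plus_record_term
    (m n : ℕ) (h1 : 1 ≤ n) (h2 : n < m) (p : ℕ → ZMod m)
    (k : ℕ) (hk : k ∈ Finset.Icc 1 (m - 1)) :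
    (H n p (((V n p + k : ℕ)) : ZMod m) : ℤ)
      = C n p ((V n p : ℤ) + k) - C n p (V n p)
        + (((Finset.Icc 1 k).sup
            (fun i => (C n p ((V n p : ℤ) - 1) - C n p ((V n p : ℤ) + i - 1)).toNat) : ℕ) : ℤ) :=
  H_eq_C_plus_record_term_general m n h2 p k

end Parking
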